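/- Assume in addition that σ(t) ≠ 0 for every t ∈ [0,T]. Then there exists a constant M > 0 (depending on H, T and σ) such that (1/M) · t^{2H−1} ≤ σ̂(t)/σ(t) ≤ M · t^{2H−1} for every t ∈ [0,T]. -/

import Mathlib

open MeasureTheory Set intervalIntegral

/-- The fractional kernel `φ(x) = H(2H−1)|x|^{2H−2}`. -/
noncomputable def fracKernel (H x : ℝ) : ℝ := H * (2 * H - 1) * |x| ^ (2 * H - 2)

/-- `σ̂(t) = ∫₀ᵗ φ(t−r) σ(r) dr`. -/
noncomputable def hatSigma (H : ℝ) (σ : ℝ → ℝ) (t : ℝ) : ℝ :=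
  ∫ r in (0:ℝ)..t, fracKernel H (t - r) * σ r

/-!
Since `σ` is continuous and has no zero on the connected set `[0, T]`, it has a constant sign,
and after replacing `σ` by `-σ` we may assume `0 < a ≤ σ ≤ b` on `[0, T]`. The kernel is
nonnegative, so `σ̂` is monotone in `σ`, and `σ̂` of a constant `c` is `c · H t^{2H−1}`, because
`∫₀ᵗ φ = H t^{2H−1}`. Hence `a H t^{2H−1} ≤ σ̂(t) ≤ b H t^{2H−1}`, and dividing by
`σ(t) ∈ [a, b]` gives the claim with `M = b / (a H)` (using `H ≤ 1`).
-/

lemma IsPreconnected.pos_or_neg_of_ne_zero {X : Type*} [TopologicalSpace X] {s : Set X}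
    (hs : IsPreconnected s) {f : X → ℝ} (hf : ContinuousOn f s) (h : ∀ x ∈ s, f x ≠ 0) :
    (∀ x ∈ s, 0 < f x) ∨ (∀ x ∈ s, f x < 0) := by
  by_contra! ⟨⟨x, hx, hfx⟩, ⟨y, hy, hfy⟩⟩
  obtain ⟨z, hz, hfz⟩ := hs.intermediate_value hx hy hf ⟨hfx, hfy⟩
  exact h z hz hfz

lemma fracKernel_nonneg {H : ℝ} (hH : 1 / 2 ≤ H) (x : ℝ) : 0 ≤ fracKernel H x := by
  unfold fracKernel
  have : 0 ≤ 2 * H - 1 := by linarith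
  positivity

lemma fracKernel_eqOn_uIcc (H : ℝ) {t : ℝ} (ht : 0 ≤ t) :
    EqOn (fracKernel H) (fun x => H * (2 * H - 1) * x ^ (2 * H - 2)) (uIcc 0 t) := by
  intro x hx
  rw [uIcc_of_le ht] at hx
  simp only [fracKernel, abs_of_nonneg hx.1]

lemma intervalIntegrable_fracKernel {H : ℝ} (hH : 1 / 2 < H) {t : ℝ} (ht : 0 ≤ t) :
    IntervalIntegrable (fracKernel H) volume 0 t :=
  ((intervalIntegrable_rpow' (by linarith)).const_mul _).congr
    ((fracKernel_eqOn_uIcc H ht).symm.mono uIoc_subset_uIcc)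

lemma integral_fracKernel {H : ℝ} (hH : 1 / 2 < H) {t : ℝ} (ht : 0 ≤ t) :
    ∫ x in (0:ℝ)..t, fracKernel H x = H * t ^ (2 * H - 1) := by
  have hκ : 2 * H - 1 ≠ 0 := by linarith
  rw [intervalIntegral.integral_congr (fracKernel_eqOn_uIcc H ht),
    intervalIntegral.integral_const_mul,
    integral_rpow (Or.inl (by linarith)), show 2 * H - 2 + 1 = 2 * H - 1 by ring,
    Real.zero_rpow hκ, sub_zero, mul_assoc, mul_div_cancel₀ _ hκ]

lemma intervalIntegrable_fracKernel_sub {H : ℝ} (hH : 1 / 2 < H) {t : ℝ} (ht : 0 ≤ t) :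
    IntervalIntegrable (fun r => fracKernel H (t - r)) volume 0 t := by
  simpa using ((intervalIntegrable_fracKernel hH ht).comp_sub_left t).symm

lemma hatSigma_const {H : ℝ} (hH : 1 / 2 < H) (c : ℝ) {t : ℝ} (ht : 0 ≤ t) :
    hatSigma H (fun _ => c) t = c * (H * t ^ (2 * H - 1)) := by
  rw [hatSigma, intervalIntegral.integral_mul_const, integral_comp_sub_left (fracKernel H),
    sub_self, sub_zero, integral_fracKernel hH ht, mul_comm]

lemma hatSigma_neg (H : ℝ) (σ : ℝ → ℝ) (t : ℝ) : hatSigma H (-σ) t = -hatSigma H σ t := by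
  simp [hatSigma, intervalIntegral.integral_neg]

lemma hatSigma_mono {H : ℝ} (hH : 1 / 2 < H) {σ τ : ℝ → ℝ} {t : ℝ} (ht : 0 ≤ t)
    (hσ : ContinuousOn σ (Icc 0 t)) (hτ : ContinuousOn τ (Icc 0 t))
    (hστ : ∀ r ∈ Icc 0 t, σ r ≤ τ r) :
    hatSigma H σ t ≤ hatSigma H τ t := by
  have hφ := intervalIntegrable_fracKernel_sub hH ht
  rw [← uIcc_of_le ht] at hσ hτ
  exact integral_mono_on ht (hφ.mul_continuousOn hσ) (hφ.mul_continuousOn hτ) fun r hr =>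
    mul_le_mul_of_nonneg_left (hστ r hr) (fracKernel_nonneg hH.le _)

lemma hatSigma_mem_Icc {H : ℝ} (hH : 1 / 2 < H) {σ : ℝ → ℝ} {t a b : ℝ} (ht : 0 ≤ t)
    (hσ : ContinuousOn σ (Icc 0 t)) (hab : ∀ r ∈ Icc 0 t, σ r ∈ Icc a b) :
    hatSigma H σ t ∈ Icc (a * (H * t ^ (2 * H - 1))) (b * (H * t ^ (2 * H - 1))) := by
  rw [← hatSigma_const hH a ht, ← hatSigma_const hH b ht]
  exact ⟨hatSigma_mono hH ht continuousOn_const hσ fun r hr => (hab r hr).1,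
    hatSigma_mono hH ht hσ continuousOn_const fun r hr => (hab r hr).2⟩

lemma exists_hatSigma_div_bounds_of_pos {H T : ℝ} (hH : H ∈ Ioo (1 / 2 : ℝ) 1) (hT : 0 ≤ T)
    {σ : ℝ → ℝ} (hσ : ContinuousOn σ (Icc 0 T)) (hpos : ∀ t ∈ Icc (0:ℝ) T, 0 < σ t) :
    ∃ M : ℝ, 0 < M ∧ ∀ t ∈ Icc (0:ℝ) T,
      (1 / M) * t ^ (2 * H - 1) ≤ hatSigma H σ t / σ t ∧
        hatSigma H σ t / σ t ≤ M * t ^ (2 * H - 1) := by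
  have hne : (Icc (0:ℝ) T).Nonempty := nonempty_Icc.2 hT
  obtain ⟨xa, hxa, hmin⟩ := isCompact_Icc.exists_isMinOn hne hσ
  obtain ⟨xb, hxb, hmax⟩ := isCompact_Icc.exists_isMaxOn hne hσ
  set a := σ xa
  set b := σ xb
  have ha : 0 < a := hpos xa hxa
  have hb : 0 < b := hpos xb hxb
  have hH0 : 0 < H := by linarith [hH.1]
  refine ⟨b / (a * H), by positivity, fun t ht => ?_⟩
  have hsub : Icc 0 t ⊆ Icc 0 T := Icc_subset_Icc_right ht.2
  obtain ⟨hlow, hup⟩ := hatSigma_mem_Icc hH.1 ht.1 (hσ.mono hsub) fun r hr =>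
    ⟨hmin (hsub hr), hmax (hsub hr)⟩
  set κ := t ^ (2 * H - 1)
  have hκ : 0 ≤ κ := Real.rpow_nonneg ht.1 _
  have hS : 0 ≤ hatSigma H σ t := (by positivity : 0 ≤ a * (H * κ)).trans hlow
  constructor
  · calc 1 / (b / (a * H)) * κ = a * (H * κ) / b := by field_simp
      _ ≤ hatSigma H σ t / σ t := div_le_div₀ hS hlow (hpos t ht) (hmax ht)
  · calc hatSigma H σ t / σ t ≤ b * (H * κ) / a := div_le_div₀ (by positivity) hup ha (hmin ht)
      _ = b / (a * H) * κ * H ^ 2 := by field_simp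
      _ ≤ b / (a * H) * κ := mul_le_of_le_one_right (by positivity) (by nlinarith [hH.2])

/-- Two-sided bound: if `σ` is continuous and never vanishes on `[0,T]`, then
there is `M > 0` with `(1/M) t^{2H−1} ≤ σ̂(t)/σ(t) ≤ M t^{2H−1}` on `[0,T]`. -/
theorem hatSigma_div_sigma_bounds
    (H T : ℝ) (hH : H ∈ Set.Ioo (1/2 : ℝ) 1) (hT : 0 < T)
    (σ : ℝ → ℝ) (hσ : ContinuousOn σ (Set.Icc 0 T))
    (hne : ∀ t ∈ Set.Icc (0:ℝ) T, σ t ≠ 0) :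
    ∃ M : ℝ, 0 < M ∧ ∀ t ∈ Set.Icc (0:ℝ) T,
      (1 / M) * t ^ (2 * H - 1) ≤ hatSigma H σ t / σ t ∧
        hatSigma H σ t / σ t ≤ M * t ^ (2 * H - 1) := by
  rcases isPreconnected_Icc.pos_or_neg_of_ne_zero hσ hne with hpos | hneg
  · exact exists_hatSigma_div_bounds_of_pos hH hT.le hσ hpos
  · obtain ⟨M, hM, hbd⟩ := exists_hatSigma_div_bounds_of_pos hH hT.le hσ.neg
      fun t ht => neg_pos.2 (hneg t ht)
    refine ⟨M, hM, fun t ht => ?_⟩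
    simpa only [hatSigma_neg, Pi.neg_apply, neg_div_neg_eq] using hbd t ht
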